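/- Let ã : ℝⁿ⁺¹ × ℝⁿ⁺¹ → ℂ be a smooth function such that ã(z, w) = 0 for all unit vectors z, w ∈ ℝⁿ⁺¹ with z_{n+1} ≥ 0, w_{n+1} ≥ 0 and (z_{n+1} = 0 or w_{n+1} = 0). Then the function a(x, ξ) = ã(RC(x), RC(ξ)) satisfies the SG-estimates of order (−1, −1): for all multi-indices α, β there is C_{αβ} > 0 such that |∂ₓ^β ∂_ξ^α a(x, ξ)| ≤ C_{αβ} ⟨x⟩^{−1−|β|} ⟨ξ⟩^{−1−|α|} for all x, ξ ∈ ℝⁿ. (That is, a classical SG-symbol of order (0,0) whose principal symbol σ(a) vanishes is a symbol of order (−1, −1).) -/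

import Mathlib

open MeasureTheory

noncomputable section

/-- ⟨x⟩ = √(1 + |x|²). -/
def sgBr {k : ℕ} (x : EuclideanSpace ℝ (Fin k)) : ℝ := Real.sqrt (1 + ‖x‖ ^ 2)

/-- The radial compactification map RC(x) = (x/⟨x⟩, 1/⟨x⟩). -/
def RC {n : ℕ} (x : EuclideanSpace ℝ (Fin n)) : EuclideanSpace ℝ (Fin (n + 1)) :=
  WithLp.toLp 2 (fun i => Fin.snoc (α := fun _ => ℝ) (fun j : Fin n => x j / sgBr x) (1 / sgBr x) i)

/-- Iterated directional derivative along a list of directions. -/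
def iterDeriv {E : Type*} [NormedAddCommGroup E] [NormedSpace ℝ E] :
    List E → (E → ℂ) → E → ℂ
  | [], f => f
  | v :: vs, f => fun x => fderiv ℝ (iterDeriv vs f) x v

/-- The i-th coordinate direction in the x-variables. -/
def eX (n : ℕ) (i : Fin n) : EuclideanSpace ℝ (Fin n) × EuclideanSpace ℝ (Fin n) :=
  (EuclideanSpace.single i 1, 0)

/-- The i-th coordinate direction in the ξ-variables. -/
def eXi (n : ℕ) (i : Fin n) : EuclideanSpace ℝ (Fin n) × EuclideanSpace ℝ (Fin n) :=
  (0, EuclideanSpace.single i 1)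

/-- a : ℝⁿ × ℝⁿ → ℂ is smooth and satisfies the SG-estimates of order (μ, ν):
for all multi-indices β (in x, encoded as a list of coordinates with multiplicity) and
α (in ξ), |∂ₓ^β ∂_ξ^α a(x,ξ)| ≤ C ⟨x⟩^{ν-|β|} ⟨ξ⟩^{μ-|α|}. -/
def IsSGSymbol (n : ℕ) (μ ν : ℝ)
    (a : EuclideanSpace ℝ (Fin n) × EuclideanSpace ℝ (Fin n) → ℂ) : Prop :=
  ContDiff ℝ (⊤ : ℕ∞) a ∧
    ∀ β α : List (Fin n), ∃ C > 0, ∀ x ξ : EuclideanSpace ℝ (Fin n),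
      ‖iterDeriv (β.map (eX n) ++ α.map (eXi n)) a (x, ξ)‖ ≤
        C * sgBr x ^ (ν - (β.length : ℝ)) * sgBr ξ ^ (μ - (α.length : ℝ))

/-- The boundary of the compactified phase space: pairs of unit vectors (z, w) in ℝⁿ⁺¹
with z_{n+1} ≥ 0, w_{n+1} ≥ 0 and z_{n+1} = 0 or w_{n+1} = 0. -/
def phaseBoundary (n : ℕ) :
    Set (EuclideanSpace ℝ (Fin (n + 1)) × EuclideanSpace ℝ (Fin (n + 1))) :=
  {p | ‖p.1‖ = 1 ∧ ‖p.2‖ = 1 ∧ 0 ≤ p.1 (Fin.last n) ∧ 0 ≤ p.2 (Fin.last n) ∧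
    (p.1 (Fin.last n) = 0 ∨ p.2 (Fin.last n) = 0)}




variable {E G : Type*} [NormedAddCommGroup E] [NormedSpace ℝ E]
  [NormedAddCommGroup G] [NormedSpace ℝ G]

theorem iterDeriv_nil (f : E → ℂ) : iterDeriv [] f = f := rfl

theorem iterDeriv_cons (v : E) (vs : List E) (f : E → ℂ) (x : E) :
    iterDeriv (v :: vs) f x = fderiv ℝ (iterDeriv vs f) x v := rfl

/-- iterDeriv only depends on the function on an open set. -/
theorem iterDeriv_congr {U : Set E} (hU : IsOpen U) {f g : E → ℂ}
    (h : ∀ x ∈ U, f x = g x) :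
    ∀ (vs : List E), ∀ x ∈ U, iterDeriv vs f x = iterDeriv vs g x := by
  intro vs
  induction vs with
  | nil => exact h
  | cons v vs ih =>
    intro x hx
    rw [iterDeriv_cons, iterDeriv_cons]
    have hev : iterDeriv vs f =ᶠ[nhds x] iterDeriv vs g :=
      Filter.eventuallyEq_of_mem (hU.mem_nhds hx) ih
    rw [hev.fderiv_eq]

theorem iterDeriv_contDiffOn {U : Set E} (hU : IsOpen U) {f : E → ℂ}
    (hf : ContDiffOn ℝ (⊤ : ℕ∞) f U) (vs : List E) :
    ContDiffOn ℝ (⊤ : ℕ∞) (iterDeriv vs f) U := by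
  induction vs with
  | nil => exact hf
  | cons v vs ih =>
    have : ContDiffOn ℝ (⊤ : ℕ∞) (fun x => fderiv ℝ (iterDeriv vs f) x) U :=
      ih.fderiv_of_isOpen hU (by simp)
    exact this.clm_apply contDiffOn_const

theorem iterDeriv_differentiableAt {U : Set E} (hU : IsOpen U) {f : E → ℂ}
    (hf : ContDiffOn ℝ (⊤ : ℕ∞) f U) (vs : List E) {x : E} (hx : x ∈ U) :
    DifferentiableAt ℝ (iterDeriv vs f) x :=
  (((iterDeriv_contDiffOn hU hf vs).differentiableOn (by simp)).differentiableAt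
    (hU.mem_nhds hx))

theorem iterDeriv_continuousOn {U : Set E} (hU : IsOpen U) {f : E → ℂ}
    (hf : ContDiffOn ℝ (⊤ : ℕ∞) f U) (vs : List E) :
    ContinuousOn (iterDeriv vs f) U :=
  (iterDeriv_contDiffOn hU hf vs).continuousOn

/-- scaling each direction. -/
theorem iterDeriv_smul_list {U : Set E} (hU : IsOpen U) {f : E → ℂ}
    (hf : ContDiffOn ℝ (⊤ : ℕ∞) f U) :
    ∀ (vs : List (ℝ × E)), ∀ x ∈ U,
      iterDeriv (vs.map fun p => p.1 • p.2) f x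
        = (vs.map Prod.fst).prod • iterDeriv (vs.map Prod.snd) f x := by
  intro vs
  induction vs with
  | nil => intro x _; simp
  | cons p vs ih =>
    intro x hx
    simp only [List.map_cons, List.prod_cons, iterDeriv_cons]
    rw [_root_.map_smul]
    have hev : iterDeriv (vs.map fun p => p.1 • p.2) f =ᶠ[nhds x]
        fun y => (vs.map Prod.fst).prod • iterDeriv (vs.map Prod.snd) f y :=
      Filter.eventuallyEq_of_mem (hU.mem_nhds hx) ih
    rw [hev.fderiv_eq, fderiv_fun_const_smul (iterDeriv_differentiableAt hU hf _ hx)]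
    simp [smul_smul, mul_comm, mul_assoc]

/-- Chain rule for iterDeriv with an affine map. -/
theorem iterDeriv_comp_affine {U : Set (E)} (hU : IsOpen U) {f : E → ℂ}
    (hf : ContDiffOn ℝ (⊤ : ℕ∞) f U) (L : G →L[ℝ] E) (p0 : E) :
    ∀ (vs : List G), ∀ x : G, (p0 + L x) ∈ U →
      iterDeriv vs (fun g => f (p0 + L g)) x = iterDeriv (vs.map L) f (p0 + L x) := by
  intro vs
  induction vs with
  | nil => intro x _; rfl
  | cons v vs ih =>
    intro x hx
    rw [iterDeriv_cons, List.map_cons, iterDeriv_cons]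
    have hopen : IsOpen {g : G | p0 + L g ∈ U} :=
      (hU.preimage (by continuity : Continuous fun g : G => p0 + L g))
    have hev : iterDeriv vs (fun g => f (p0 + L g)) =ᶠ[nhds x]
        fun g => iterDeriv (vs.map L) f (p0 + L g) :=
      Filter.eventuallyEq_of_mem (hopen.mem_nhds hx) ih
    rw [hev.fderiv_eq]
    have hA : HasFDerivAt (fun g : G => p0 + L g) L x := (L.hasFDerivAt).const_add p0
    have hg : DifferentiableAt ℝ (iterDeriv (vs.map L) f) (p0 + L x) :=
      iterDeriv_differentiableAt hU hf _ hx
    have hcm := (hg.hasFDerivAt.comp x hA)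
    simp only [Function.comp_def] at hcm
    rw [hcm.fderiv]
    rfl

/-- Vanishing of tangential iterated derivatives on a slice. -/
theorem iterDeriv_zero_on_slice {U O : Set E} (hU : IsOpen U) (hO : IsOpen O)
    {f : E → ℂ} (hf : ContDiffOn ℝ (⊤ : ℕ∞) f U) (ℓ : E →L[ℝ] ℝ) (c : ℝ)
    (h0 : ∀ x ∈ U ∩ O, ℓ x = c → f x = 0) :
    ∀ (vs : List E), (∀ v ∈ vs, ℓ v = 0) →
      ∀ x ∈ U ∩ O, ℓ x = c → iterDeriv vs f x = 0 := by
  intro vs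
  induction vs with
  | nil => intro _ x hx hc; exact h0 x hx hc
  | cons v vs ih =>
    intro hvs x hx hc
    have hv : ℓ v = 0 := hvs v List.mem_cons_self
    have hvs' : ∀ u ∈ vs, ℓ u = 0 := fun u hu => hvs u (List.mem_cons_of_mem v hu)
    rw [iterDeriv_cons]
    set g := iterDeriv vs f with hg
    have hdg : DifferentiableAt ℝ g x := iterDeriv_differentiableAt hU hf vs hx.1
    have hline : HasDerivAt (fun t : ℝ => x + t • v) v 0 := by
      simpa using ((hasDerivAt_id (0:ℝ)).smul_const v).const_add x
    have hcomp : HasDerivAt (fun t : ℝ => g (x + t • v)) (fderiv ℝ g x v) 0 := by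
      have hg0 : HasFDerivAt g (fderiv ℝ g x) (x + (0:ℝ) • v) := by
        simpa using hdg.hasFDerivAt
      have := hg0.comp_hasDerivAt 0 hline
      simpa [Function.comp_def] using this
    have hopen : IsOpen {t : ℝ | x + t • v ∈ U ∩ O} :=
      ((hU.inter hO).preimage (by continuity : Continuous fun t : ℝ => x + t • v))
    have hmem : (0:ℝ) ∈ {t : ℝ | x + t • v ∈ U ∩ O} := by simpa using hx
    have hev : (fun t : ℝ => g (x + t • v)) =ᶠ[nhds 0] fun _ => (0:ℂ) := by
      refine Filter.eventuallyEq_of_mem (hopen.mem_nhds hmem) ?_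
      intro t ht
      exact ih hvs' _ ht (by simp [map_add, hc, hv])
    have : HasDerivAt (fun _ : ℝ => (0:ℂ)) (fderiv ℝ g x v) 0 := hcomp.congr_of_eventuallyEq hev.symm
    have h0' : deriv (fun _ : ℝ => (0:ℂ)) 0 = fderiv ℝ g x v := this.deriv
    simpa using h0'.symm

/-- continuity closure along a ray. -/
theorem zero_of_zero_on_ray {U : Set E} (hU : IsOpen U) {f : E → ℂ}
    (hf : ContinuousOn f U) {p : E} (hp : p ∈ U) (u : E)
    (h : ∀ᶠ t in nhdsWithin (0:ℝ) (Set.Ioi 0), f (p + t • u) = 0) : f p = 0 := by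
  have hcont : Filter.Tendsto (fun t : ℝ => f (p + t • u)) (nhdsWithin 0 (Set.Ioi 0)) (nhds (f p)) := by
    have h1 : Filter.Tendsto (fun t : ℝ => p + t • u) (nhdsWithin 0 (Set.Ioi 0)) (nhds p) := by
      have : Continuous fun t : ℝ => p + t • u := by continuity
      simpa using (this.tendsto 0).mono_left nhdsWithin_le_nhds
    exact ((hf.continuousAt (hU.mem_nhds hp)).tendsto).comp h1
  have hzero : Filter.Tendsto (fun t : ℝ => f (p + t • u)) (nhdsWithin 0 (Set.Ioi 0)) (nhds 0) := by
    exact Filter.Tendsto.congr' (h.mono fun t ht => ht.symm) tendsto_const_nhds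
  exact tendsto_nhds_unique hcont hzero





variable {n : ℕ}

theorem sgBr_ge_one (x : EuclideanSpace ℝ (Fin n)) : 1 ≤ sgBr x := by
  rw [sgBr]
  calc (1:ℝ) = Real.sqrt 1 := by simp
    _ ≤ _ := Real.sqrt_le_sqrt (by nlinarith [sq_nonneg ‖x‖])

theorem sgBr_pos (x : EuclideanSpace ℝ (Fin n)) : 0 < sgBr x :=
  lt_of_lt_of_le one_pos (sgBr_ge_one x)

/-- The linear embedding x ↦ (x, 0). -/
def snocL (n : ℕ) : EuclideanSpace ℝ (Fin n) →L[ℝ] EuclideanSpace ℝ (Fin (n + 1)) :=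
  LinearMap.toContinuousLinearMap
  { toFun := fun x => (WithLp.toLp 2 (Fin.snoc (α := fun _ => ℝ) x 0) : EuclideanSpace ℝ (Fin (n+1)))
    map_add' := by
      intro x y
      ext i
      induction i using Fin.lastCases with
      | last => simp [Fin.snoc_last, PiLp.add_apply]
      | cast j => simp [Fin.snoc_castSucc, PiLp.add_apply]
    map_smul' := by
      intro c x
      ext i
      induction i using Fin.lastCases with
      | last => simp [Fin.snoc_last, PiLp.smul_apply]
      | cast j => simp [Fin.snoc_castSucc, PiLp.smul_apply] }

theorem snocL_apply (x : EuclideanSpace ℝ (Fin n)) (i : Fin (n+1)) :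
    snocL n x i = Fin.snoc (α := fun _ => ℝ) x 0 i := rfl

/-- ι x = (x, 1). -/
def iota (x : EuclideanSpace ℝ (Fin n)) : EuclideanSpace ℝ (Fin (n + 1)) :=
  EuclideanSpace.single (Fin.last n) (1:ℝ) + snocL n x

theorem iota_apply_cast (x : EuclideanSpace ℝ (Fin n)) (j : Fin n) :
    iota x (Fin.castSucc j) = x j := by
  simp [iota, PiLp.add_apply, snocL_apply, EuclideanSpace.single_apply,
    Fin.snoc_castSucc, (Fin.castSucc_lt_last j).ne]

theorem iota_apply_last (x : EuclideanSpace ℝ (Fin n)) :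
    iota x (Fin.last n) = 1 := by
  simp [iota, PiLp.add_apply, snocL_apply, EuclideanSpace.single_apply, Fin.snoc_last]

theorem norm_sq_eq_sum (x : EuclideanSpace ℝ (Fin n)) : ‖x‖ ^ 2 = ∑ j, x j ^ 2 := by
  rw [EuclideanSpace.norm_eq, Real.sq_sqrt (by positivity)]
  simp [sq_abs]

theorem norm_iota (x : EuclideanSpace ℝ (Fin n)) : ‖iota x‖ = sgBr x := by
  rw [EuclideanSpace.norm_eq, sgBr]
  congr 1
  rw [Fin.sum_univ_castSucc]
  simp only [iota_apply_cast, iota_apply_last, Real.norm_eq_abs, sq_abs]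
  rw [norm_sq_eq_sum]
  ring

theorem iota_ne_zero (x : EuclideanSpace ℝ (Fin n)) : iota x ≠ 0 := by
  intro h
  have := norm_iota x
  rw [h, norm_zero] at this
  exact absurd this.symm (ne_of_gt (sgBr_pos x))

theorem RC_eq (x : EuclideanSpace ℝ (Fin n)) : RC x = ‖iota x‖⁻¹ • iota x := by
  ext i
  rw [norm_iota]
  induction i using Fin.lastCases with
  | last =>
    show Fin.snoc (α := fun _ => ℝ) (fun j : Fin n => x j / sgBr x) (1 / sgBr x) (Fin.last n) = _
    rw [Fin.snoc_last, PiLp.smul_apply, iota_apply_last]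
    simp [one_div]
  | cast j =>
    show Fin.snoc (α := fun _ => ℝ) (fun j : Fin n => x j / sgBr x) (1 / sgBr x) (Fin.castSucc j) = _
    rw [Fin.snoc_castSucc, PiLp.smul_apply, iota_apply_cast]
    simp [div_eq_inv_mul]

theorem norm_RC (x : EuclideanSpace ℝ (Fin n)) : ‖RC x‖ = 1 := by
  rw [RC_eq, norm_smul, norm_inv, norm_norm, norm_iota]
  field_simp [(sgBr_pos x).ne']

theorem RC_last (x : EuclideanSpace ℝ (Fin n)) : RC x (Fin.last n) = (sgBr x)⁻¹ := by
  rw [RC_eq, PiLp.smul_apply, norm_iota, iota_apply_last]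
  simp

theorem abs_coord_le_norm (z : EuclideanSpace ℝ (Fin n)) (i : Fin n) : |z i| ≤ ‖z‖ := by
  have h1 : z i ^ 2 ≤ ‖z‖ ^ 2 := by
    rw [norm_sq_eq_sum]
    exact Finset.single_le_sum (f := fun j => z j ^ 2) (fun j _ => sq_nonneg _) (Finset.mem_univ i)
  have h2 : |z i| ^ 2 ≤ ‖z‖ ^ 2 := by rwa [sq_abs]
  nlinarith [abs_nonneg (z i), norm_nonneg z]

-- ============ Part 3: setup on the compactified side ============

variable {n : ℕ}

/-- normalization map -/
def Nz {n : ℕ} (z : EuclideanSpace ℝ (Fin n)) : EuclideanSpace ℝ (Fin n) := ‖z‖⁻¹ • z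

def bfun {n : ℕ} (atil : EuclideanSpace ℝ (Fin (n + 1)) × EuclideanSpace ℝ (Fin (n + 1)) → ℂ)
    (p : EuclideanSpace ℝ (Fin (n + 1)) × EuclideanSpace ℝ (Fin (n + 1))) : ℂ :=
  atil (Nz p.1, Nz p.2)

def Uset (n : ℕ) : Set (EuclideanSpace ℝ (Fin (n + 1)) × EuclideanSpace ℝ (Fin (n + 1))) :=
  {p | p.1 ≠ 0 ∧ p.2 ≠ 0}

theorem Uset_open : IsOpen (Uset n) := by
  have h1 : IsOpen {p : EuclideanSpace ℝ (Fin (n + 1)) × EuclideanSpace ℝ (Fin (n + 1)) | p.1 ≠ 0} :=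
    isOpen_compl_singleton.preimage continuous_fst
  have h2 : IsOpen {p : EuclideanSpace ℝ (Fin (n + 1)) × EuclideanSpace ℝ (Fin (n + 1)) | p.2 ≠ 0} :=
    isOpen_compl_singleton.preimage continuous_snd
  exact h1.inter h2

theorem Nz_norm {z : EuclideanSpace ℝ (Fin n)} (hz : z ≠ 0) : ‖Nz z‖ = 1 := by
  rw [Nz, norm_smul, norm_inv, norm_norm]
  field_simp [norm_ne_zero_iff.2 hz]

theorem Nz_apply (z : EuclideanSpace ℝ (Fin n)) (i : Fin n) : Nz z i = ‖z‖⁻¹ * z i := by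
  rw [Nz, PiLp.smul_apply]; rfl

theorem Nz_smul {z : EuclideanSpace ℝ (Fin n)} (hz : z ≠ 0) {c : ℝ} (hc : 0 < c) :
    Nz (c • z) = Nz z := by
  rw [Nz, Nz, norm_smul, smul_smul, Real.norm_eq_abs, abs_of_pos hc]
  congr 1
  have h0 : ‖z‖ ≠ 0 := norm_ne_zero_iff.2 hz
  field_simp

theorem bfun_contDiffOn {atil : EuclideanSpace ℝ (Fin (n + 1)) × EuclideanSpace ℝ (Fin (n + 1)) → ℂ}
    (ha : ContDiff ℝ (⊤ : ℕ∞) atil) : ContDiffOn ℝ (⊤ : ℕ∞) (bfun atil) (Uset n) := by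
  intro p hp
  apply ContDiffAt.contDiffWithinAt
  have h1 : ContDiffAt ℝ (⊤ : ℕ∞) (fun q : EuclideanSpace ℝ (Fin (n + 1)) × EuclideanSpace ℝ (Fin (n + 1)) => Nz q.1) p := by
    have hn : ContDiffAt ℝ (⊤ : ℕ∞) (fun q : EuclideanSpace ℝ (Fin (n + 1)) × EuclideanSpace ℝ (Fin (n + 1)) => ‖q.1‖) p :=
      contDiffAt_fst.norm ℝ hp.1
    exact (hn.inv (norm_ne_zero_iff.2 hp.1)).smul contDiffAt_fst
  have h2 : ContDiffAt ℝ (⊤ : ℕ∞) (fun q : EuclideanSpace ℝ (Fin (n + 1)) × EuclideanSpace ℝ (Fin (n + 1)) => Nz q.2) p := by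
    have hn : ContDiffAt ℝ (⊤ : ℕ∞) (fun q : EuclideanSpace ℝ (Fin (n + 1)) × EuclideanSpace ℝ (Fin (n + 1)) => ‖q.2‖) p :=
      contDiffAt_snd.norm ℝ hp.2
    exact (hn.inv (norm_ne_zero_iff.2 hp.2)).smul contDiffAt_snd
  exact ha.contDiffAt.comp p (h1.prodMk h2)


section withAtil

variable {atil : EuclideanSpace ℝ (Fin (n + 1)) × EuclideanSpace ℝ (Fin (n + 1)) → ℂ}
  (hvanish : ∀ p ∈ phaseBoundary n, atil p = 0)

include hvanish

theorem bfun_zero1 (p : EuclideanSpace ℝ (Fin (n + 1)) × EuclideanSpace ℝ (Fin (n + 1)))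
    (hp : p ∈ Uset n) (h1 : p.1 (Fin.last n) = 0) (h2 : 0 ≤ p.2 (Fin.last n)) :
    bfun atil p = 0 := by
  apply hvanish
  refine ⟨Nz_norm hp.1, Nz_norm hp.2, ?_, ?_, Or.inl ?_⟩
  · show 0 ≤ Nz p.1 (Fin.last n); rw [Nz_apply, h1, mul_zero]
  · show 0 ≤ Nz p.2 (Fin.last n); rw [Nz_apply]; positivity
  · show Nz p.1 (Fin.last n) = 0; rw [Nz_apply, h1, mul_zero]

theorem bfun_zero2 (p : EuclideanSpace ℝ (Fin (n + 1)) × EuclideanSpace ℝ (Fin (n + 1)))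
    (hp : p ∈ Uset n) (h1 : p.2 (Fin.last n) = 0) (h2 : 0 ≤ p.1 (Fin.last n)) :
    bfun atil p = 0 := by
  apply hvanish
  refine ⟨Nz_norm hp.1, Nz_norm hp.2, ?_, ?_, Or.inr ?_⟩
  · show 0 ≤ Nz p.1 (Fin.last n); rw [Nz_apply]; positivity
  · show 0 ≤ Nz p.2 (Fin.last n); rw [Nz_apply, h1, mul_zero]
  · show Nz p.2 (Fin.last n) = 0; rw [Nz_apply, h1, mul_zero]

omit hvanish in
theorem bfun_hom {c d : ℝ} (hc : 0 < c) (hd : 0 < d)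
    (p : EuclideanSpace ℝ (Fin (n + 1)) × EuclideanSpace ℝ (Fin (n + 1))) (hp : p ∈ Uset n) :
    bfun atil (c • p.1, d • p.2) = bfun atil p := by
  rw [bfun, bfun]
  rw [Nz_smul hp.1 hc, Nz_smul hp.2 hd]

end withAtil

/-- The linear map (x, ξ) ↦ ((x,0), (ξ,0)). -/
def LLmap (n : ℕ) : (EuclideanSpace ℝ (Fin n) × EuclideanSpace ℝ (Fin n)) →L[ℝ]
    (EuclideanSpace ℝ (Fin (n + 1)) × EuclideanSpace ℝ (Fin (n + 1))) :=
  (snocL n).prodMap (snocL n)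

def q0 (n : ℕ) : EuclideanSpace ℝ (Fin (n + 1)) × EuclideanSpace ℝ (Fin (n + 1)) :=
  (EuclideanSpace.single (Fin.last n) (1:ℝ), EuclideanSpace.single (Fin.last n) (1:ℝ))

theorem J_eq (p : EuclideanSpace ℝ (Fin n) × EuclideanSpace ℝ (Fin n)) :
    q0 n + LLmap n p = (iota p.1, iota p.2) := by
  rfl

theorem snocL_last (x : EuclideanSpace ℝ (Fin n)) : snocL n x (Fin.last n) = 0 := by
  rw [snocL_apply, Fin.snoc_last]


theorem iterDeriv_a_eq {atil : EuclideanSpace ℝ (Fin (n + 1)) × EuclideanSpace ℝ (Fin (n + 1)) → ℂ}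
    (ha : ContDiff ℝ (⊤ : ℕ∞) atil) (vs : List (EuclideanSpace ℝ (Fin n) × EuclideanSpace ℝ (Fin n)))
    (x ξ : EuclideanSpace ℝ (Fin n)) :
    iterDeriv vs (fun p => atil (RC p.1, RC p.2)) (x, ξ)
      = iterDeriv (vs.map (LLmap n)) (bfun atil) (iota x, iota ξ) := by
  have hfun : (fun p : EuclideanSpace ℝ (Fin n) × EuclideanSpace ℝ (Fin n) => atil (RC p.1, RC p.2))
      = fun p => bfun atil (q0 n + LLmap n p) := by
    funext p
    rw [J_eq, bfun, RC_eq, RC_eq]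
    rfl
  rw [hfun]
  have hmem : q0 n + LLmap n (x, ξ) ∈ Uset n := by
    rw [J_eq]
    exact ⟨iota_ne_zero _, iota_ne_zero _⟩
  have := iterDeriv_comp_affine Uset_open (bfun_contDiffOn ha) (LLmap n) (q0 n) vs (x, ξ) hmem
  rw [this, J_eq]

theorem Scd_eX (c d : ℝ) (i : Fin n) :
    ((c • ContinuousLinearMap.id ℝ (EuclideanSpace ℝ (Fin (n+1)))).prodMap
      (d • ContinuousLinearMap.id ℝ (EuclideanSpace ℝ (Fin (n+1)))))
      (LLmap n (eX n i)) = c • LLmap n (eX n i) := by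
  have h2 : (LLmap n (eX n i)).2 = 0 := by
    show snocL n (0 : EuclideanSpace ℝ (Fin n)) = 0
    exact map_zero _
  refine Prod.ext ?_ ?_
  · rfl
  · show d • (LLmap n (eX n i)).2 = c • (LLmap n (eX n i)).2
    rw [h2, smul_zero, smul_zero]

theorem Scd_eXi (c d : ℝ) (i : Fin n) :
    ((c • ContinuousLinearMap.id ℝ (EuclideanSpace ℝ (Fin (n+1)))).prodMap
      (d • ContinuousLinearMap.id ℝ (EuclideanSpace ℝ (Fin (n+1)))))
      (LLmap n (eXi n i)) = d • LLmap n (eXi n i) := by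
  have h1 : (LLmap n (eXi n i)).1 = 0 := by
    show snocL n (0 : EuclideanSpace ℝ (Fin n)) = 0
    exact map_zero _
  refine Prod.ext ?_ ?_
  · show c • (LLmap n (eXi n i)).1 = d • (LLmap n (eXi n i)).1
    rw [h1, smul_zero, smul_zero]
  · rfl

theorem iterDeriv_scaling {atil : EuclideanSpace ℝ (Fin (n + 1)) × EuclideanSpace ℝ (Fin (n + 1)) → ℂ}
    (ha : ContDiff ℝ (⊤ : ℕ∞) atil) (hvanish : ∀ p ∈ phaseBoundary n, atil p = 0)
    (β α : List (Fin n)) {c d : ℝ} (hc : 0 < c) (hd : 0 < d)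
    (p : EuclideanSpace ℝ (Fin (n + 1)) × EuclideanSpace ℝ (Fin (n + 1))) (hp : p ∈ Uset n) :
    iterDeriv ((β.map (eX n) ++ α.map (eXi n)).map (LLmap n)) (bfun atil) p
      = (c ^ β.length * d ^ α.length) •
        iterDeriv ((β.map (eX n) ++ α.map (eXi n)).map (LLmap n)) (bfun atil)
          (c • p.1, d • p.2) := by
  classical
  set S := ((c • ContinuousLinearMap.id ℝ (EuclideanSpace ℝ (Fin (n+1)))).prodMap
    (d • ContinuousLinearMap.id ℝ (EuclideanSpace ℝ (Fin (n+1))))) with hS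
  have hSapp : ∀ q : (EuclideanSpace ℝ (Fin (n+1)) × EuclideanSpace ℝ (Fin (n+1))), S q = (c • q.1, d • q.2) := fun q => rfl
  set vsF := (β.map (eX n) ++ α.map (eXi n)).map (LLmap n) with hvsF
  have hb := bfun_contDiffOn (n := n) ha
  -- step 1 : replace b by b ∘ S
  have hcong : iterDeriv vsF (bfun atil) p
      = iterDeriv vsF (fun q => bfun atil ((0 : (EuclideanSpace ℝ (Fin (n+1)) × EuclideanSpace ℝ (Fin (n+1)))) + S q)) p := by
    refine iterDeriv_congr Uset_open ?_ vsF p hp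
    intro q hq
    rw [zero_add, hSapp]
    exact (bfun_hom hc hd q hq).symm
  -- step 2 : chain rule
  have hmem : (0 : (EuclideanSpace ℝ (Fin (n+1)) × EuclideanSpace ℝ (Fin (n+1)))) + S p ∈ Uset n := by
    rw [zero_add, hSapp]
    exact ⟨smul_ne_zero hc.ne' hp.1, smul_ne_zero hd.ne' hp.2⟩
  have hchain := iterDeriv_comp_affine Uset_open hb S (0 : (EuclideanSpace ℝ (Fin (n+1)) × EuclideanSpace ℝ (Fin (n+1)))) vsF p hmem
  -- step 3 : factor out the scalars
  set zs : List (ℝ × ((EuclideanSpace ℝ (Fin (n+1)) × EuclideanSpace ℝ (Fin (n+1))))) :=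
    (β.map fun i => ((c : ℝ), LLmap n (eX n i))) ++ (α.map fun i => ((d : ℝ), LLmap n (eXi n i)))
    with hzs
  have hmap1 : vsF.map S = zs.map fun r => r.1 • r.2 := by
    rw [hvsF, hzs]
    simp only [List.map_append, List.map_map]
    congr 1
    · exact List.map_congr_left fun i _ => Scd_eX c d i
    · exact List.map_congr_left fun i _ => Scd_eXi c d i
  have hmap2 : zs.map Prod.snd = vsF := by
    rw [hvsF, hzs]
    simp only [List.map_append, List.map_map]
    rfl
  have hprod : (zs.map Prod.fst).prod = c ^ β.length * d ^ α.length := by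
    rw [hzs]
    simp only [List.map_append, List.map_map]
    rw [List.prod_append]
    congr 1
    · simp [Function.comp_def, List.map_const', List.prod_replicate]
    · simp [Function.comp_def, List.map_const', List.prod_replicate]
  have hsmul := iterDeriv_smul_list Uset_open hb zs ((0 : (EuclideanSpace ℝ (Fin (n+1)) × EuclideanSpace ℝ (Fin (n+1)))) + S p) hmem
  rw [hmap1] at hchain
  rw [hcong, hchain, hsmul, hmap2, hprod]
  rw [zero_add, hSapp]

/-- MVT helper along a segment. -/
theorem line_mvt {E : Type*} [NormedAddCommGroup E] [NormedSpace ℝ E]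
    {U : Set E} (hU : IsOpen U) {f : E → ℂ} (hf : ContDiffOn ℝ (⊤ : ℕ∞) f U)
    (vs : List E) (p u : E) (a : ℝ) (M : ℝ)
    (hmem : ∀ t ∈ Set.Icc 0 a, p + t • u ∈ U)
    (hbound : ∀ t ∈ Set.Icc 0 a, ‖iterDeriv (u :: vs) f (p + t • u)‖ ≤ M)
    (ha : 0 ≤ a) :
    ‖iterDeriv vs f (p + a • u) - iterDeriv vs f p‖ ≤ M * a := by
  have hline : ∀ t : ℝ, HasDerivAt (fun t : ℝ => p + t • u) u t := fun t => by
    simpa using ((hasDerivAt_id t).smul_const u).const_add p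
  have hder : ∀ t ∈ Set.Icc (0:ℝ) a,
      HasDerivWithinAt (fun t : ℝ => iterDeriv vs f (p + t • u))
        (iterDeriv (u :: vs) f (p + t • u)) (Set.Icc 0 a) t := by
    intro t ht
    have hdiff : DifferentiableAt ℝ (iterDeriv vs f) (p + t • u) :=
      iterDeriv_differentiableAt hU hf vs (hmem t ht)
    have := hdiff.hasFDerivAt.comp_hasDerivAt t (hline t)
    exact (this.hasDerivWithinAt)
  have := norm_image_sub_le_of_norm_deriv_le_segment' hder
    (fun t ht => hbound t (Set.Ico_subset_Icc_self ht)) a (Set.right_mem_Icc.2 ha)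
  simpa using this

theorem norm_el : ‖(EuclideanSpace.single (Fin.last n) (1:ℝ))‖ = 1 := by
  rw [EuclideanSpace.norm_single]
  simp

theorem shift_norm_lb {z : EuclideanSpace ℝ (Fin (n+1))} (hz : ‖z‖ = 1) {c : ℝ}
    (hc : |c| ≤ 1/2) :
    1/2 ≤ ‖z + c • EuclideanSpace.single (Fin.last n) (1:ℝ)‖ ∧
      ‖z + c • EuclideanSpace.single (Fin.last n) (1:ℝ)‖ ≤ 2 := by
  have hcs : ‖c • EuclideanSpace.single (Fin.last n) (1:ℝ)‖ = |c| := by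
    rw [norm_smul, norm_el, Real.norm_eq_abs, mul_one]
  constructor
  · have := norm_sub_norm_le z (-(c • EuclideanSpace.single (Fin.last n) (1:ℝ)))
    have h2 : ‖z - -(c • EuclideanSpace.single (Fin.last n) (1:ℝ))‖
        = ‖z + c • EuclideanSpace.single (Fin.last n) (1:ℝ)‖ := by rw [sub_neg_eq_add]
    rw [h2, hz, norm_neg, hcs] at this
    linarith
  · have := norm_add_le z (c • EuclideanSpace.single (Fin.last n) (1:ℝ))
    rw [hz, hcs] at this
    linarith

theorem shift_coord {z : EuclideanSpace ℝ (Fin (n+1))} (c : ℝ) :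
    (z + c • EuclideanSpace.single (Fin.last n) (1:ℝ)) (Fin.last n) = z (Fin.last n) + c := by
  rw [PiLp.add_apply, PiLp.smul_apply, EuclideanSpace.single_apply]
  simp

theorem shift_ne_zero {z : EuclideanSpace ℝ (Fin (n+1))} (hz : ‖z‖ = 1) {c : ℝ}
    (hc : |c| ≤ 1/2) : z + c • EuclideanSpace.single (Fin.last n) (1:ℝ) ≠ 0 := by
  intro h
  have := (shift_norm_lb hz hc).1
  rw [h, norm_zero] at this
  linarith

section vanishing

variable {atil : EuclideanSpace ℝ (Fin (n + 1)) × EuclideanSpace ℝ (Fin (n + 1)) → ℂ}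
  (ha : ContDiff ℝ (⊤ : ℕ∞) atil) (hvanish : ∀ p ∈ phaseBoundary n, atil p = 0)

def lproj1 (n : ℕ) : (EuclideanSpace ℝ (Fin (n+1)) × EuclideanSpace ℝ (Fin (n+1))) →L[ℝ] ℝ :=
  (EuclideanSpace.proj (Fin.last n)).comp
    (ContinuousLinearMap.fst ℝ (EuclideanSpace ℝ (Fin (n+1))) (EuclideanSpace ℝ (Fin (n+1))))

def lproj2 (n : ℕ) : (EuclideanSpace ℝ (Fin (n+1)) × EuclideanSpace ℝ (Fin (n+1))) →L[ℝ] ℝ :=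
  (EuclideanSpace.proj (Fin.last n)).comp
    (ContinuousLinearMap.snd ℝ (EuclideanSpace ℝ (Fin (n+1))) (EuclideanSpace ℝ (Fin (n+1))))

theorem lproj1_apply (p : EuclideanSpace ℝ (Fin (n+1)) × EuclideanSpace ℝ (Fin (n+1))) :
    lproj1 n p = p.1 (Fin.last n) := rfl

theorem lproj2_apply (p : EuclideanSpace ℝ (Fin (n+1)) × EuclideanSpace ℝ (Fin (n+1))) :
    lproj2 n p = p.2 (Fin.last n) := rfl

include ha hvanish

theorem Dvanish1 (vs : List (EuclideanSpace ℝ (Fin (n+1)) × EuclideanSpace ℝ (Fin (n+1))))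
    (hvs : ∀ v ∈ vs, v.1 (Fin.last n) = 0) :
    ∀ p ∈ Uset n, p.1 (Fin.last n) = 0 → 0 < p.2 (Fin.last n) →
      iterDeriv vs (bfun atil) p = 0 := by
  intro p hp hz hw
  have hO : IsOpen {q : EuclideanSpace ℝ (Fin (n+1)) × EuclideanSpace ℝ (Fin (n+1)) |
      0 < q.2 (Fin.last n)} := by
    have : Continuous fun q : EuclideanSpace ℝ (Fin (n+1)) × EuclideanSpace ℝ (Fin (n+1)) =>
        lproj2 n q := (lproj2 n).continuous
    exact isOpen_Ioi.preimage this
  refine iterDeriv_zero_on_slice Uset_open hO (bfun_contDiffOn ha) (lproj1 n) 0 ?_ vs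
    (fun v hv => hvs v hv) p ⟨hp, hw⟩ hz
  intro q hq hq0
  exact bfun_zero1 hvanish q hq.1 hq0 (le_of_lt hq.2)

theorem Dvanish2 (vs : List (EuclideanSpace ℝ (Fin (n+1)) × EuclideanSpace ℝ (Fin (n+1))))
    (hvs : ∀ v ∈ vs, v.2 (Fin.last n) = 0) :
    ∀ p ∈ Uset n, p.2 (Fin.last n) = 0 → 0 < p.1 (Fin.last n) →
      iterDeriv vs (bfun atil) p = 0 := by
  intro p hp hz hw
  have hO : IsOpen {q : EuclideanSpace ℝ (Fin (n+1)) × EuclideanSpace ℝ (Fin (n+1)) |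
      0 < q.1 (Fin.last n)} := by
    have : Continuous fun q : EuclideanSpace ℝ (Fin (n+1)) × EuclideanSpace ℝ (Fin (n+1)) =>
        lproj1 n q := (lproj1 n).continuous
    exact isOpen_Ioi.preimage this
  refine iterDeriv_zero_on_slice Uset_open hO (bfun_contDiffOn ha) (lproj2 n) 0 ?_ vs
    (fun v hv => hvs v hv) p ⟨hp, hw⟩ hz
  intro q hq hq0
  exact bfun_zero2 hvanish q hq.1 hq0 (le_of_lt hq.2)

theorem Dvanish1c (vs : List (EuclideanSpace ℝ (Fin (n+1)) × EuclideanSpace ℝ (Fin (n+1))))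
    (hvs : ∀ v ∈ vs, v.1 (Fin.last n) = 0) :
    ∀ p ∈ Uset n, p.1 (Fin.last n) = 0 → 0 ≤ p.2 (Fin.last n) →
      iterDeriv vs (bfun atil) p = 0 := by
  intro p hp hz hw
  rcases lt_or_eq_of_le hw with hw' | hw'
  · exact Dvanish1 ha hvanish vs hvs p hp hz hw'
  · -- boundary case : approach along the ray p + t • (0, el)
    set u : EuclideanSpace ℝ (Fin (n+1)) × EuclideanSpace ℝ (Fin (n+1)) :=
      (0, EuclideanSpace.single (Fin.last n) (1:ℝ)) with hu
    refine zero_of_zero_on_ray Uset_open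
      (iterDeriv_continuousOn Uset_open (bfun_contDiffOn ha) vs) hp u ?_
    have hcont : Continuous fun t : ℝ => p + t • u := by continuity
    have hU' : ∀ᶠ t : ℝ in nhds 0, p + t • u ∈ Uset n := by
      have h0 : p + (0:ℝ) • u = p := by simp
      have := hcont.continuousAt (x := (0:ℝ))
      rw [ContinuousAt, h0] at this
      exact this.eventually_mem (Uset_open.mem_nhds hp)
    have hU2 : ∀ᶠ t in nhdsWithin (0:ℝ) (Set.Ioi 0), p + t • u ∈ Uset n :=
      hU'.filter_mono nhdsWithin_le_nhds
    filter_upwards [hU2, self_mem_nhdsWithin] with t htU htpos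
    apply Dvanish1 ha hvanish vs hvs _ htU
    · have : (p + t • u).1 = p.1 := by
        rw [Prod.fst_add]
        simp [hu]
      rw [this, hz]
    · have : (p + t • u).2 (Fin.last n) = p.2 (Fin.last n) + t := by
        rw [Prod.snd_add]
        have : (t • u).2 = t • EuclideanSpace.single (Fin.last n) (1:ℝ) := by simp [hu]
        rw [this]
        exact shift_coord t
      rw [this, ← hw', zero_add]
      exact htpos

end vanishing

theorem add_smul_el {n : ℕ} (v : EuclideanSpace ℝ (Fin (n+1))) (c s : ℝ) :
    v + c • EuclideanSpace.single (Fin.last n) (1:ℝ) + s • EuclideanSpace.single (Fin.last n) (1:ℝ)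
      = v + (c + s) • EuclideanSpace.single (Fin.last n) (1:ℝ) := by
  rw [add_assoc, ← add_smul]

theorem arith_combine (M q a b : ℝ) (hM : 0 ≤ M) (hq : 0 ≤ q) (ha0 : 0 < a) (ha1 : a ≤ 1)
    (hb0 : 0 < b) (hb1 : b ≤ 1)
    (hA : a ≤ 1/2 → b ≤ 1/2 → q ≤ M * a * b) (hB : a ≤ 1/2 → q ≤ M * a)
    (hC : b ≤ 1/2 → q ≤ M * b) (hD : q ≤ M) : q ≤ (4 * M + 1) * a * b := by
  rcases le_or_gt a (1/2) with hac | hac <;> rcases le_or_gt b (1/2) with hbc | hbc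
  · have := hA hac hbc
    nlinarith
  · have := hB hac
    nlinarith
  · have := hC hbc
    nlinarith
  · have h14 : 1/4 < a * b := by nlinarith
    nlinarith [mul_nonneg hM (le_of_lt (by linarith : (0:ℝ) < 4 * (a * b) - 1))]

theorem core_bound {atil : EuclideanSpace ℝ (Fin (n + 1)) × EuclideanSpace ℝ (Fin (n + 1)) → ℂ}
    (ha : ContDiff ℝ (⊤ : ℕ∞) atil) (hvanish : ∀ p ∈ phaseBoundary n, atil p = 0)
    (vsF : List (EuclideanSpace ℝ (Fin (n+1)) × EuclideanSpace ℝ (Fin (n+1))))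
    (h1 : ∀ v ∈ vsF, v.1 (Fin.last n) = 0) (h2 : ∀ v ∈ vsF, v.2 (Fin.last n) = 0) :
    ∃ C > 0, ∀ z w : EuclideanSpace ℝ (Fin (n+1)), ‖z‖ = 1 → ‖w‖ = 1 →
      0 < z (Fin.last n) → 0 < w (Fin.last n) →
      ‖iterDeriv vsF (bfun atil) (z, w)‖ ≤ C * z (Fin.last n) * w (Fin.last n) := by
  classical
  have hb := bfun_contDiffOn (n := n) ha
  set l := Fin.last n with hl
  set el : EuclideanSpace ℝ (Fin (n+1)) := EuclideanSpace.single l (1:ℝ) with hel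
  set D := iterDeriv vsF (bfun atil) with hD
  set D1 := iterDeriv (((0 : EuclideanSpace ℝ (Fin (n+1))), el) :: vsF) (bfun atil) with hD1
  set D1' := iterDeriv ((el, (0 : EuclideanSpace ℝ (Fin (n+1)))) :: vsF) (bfun atil) with hD1'
  set D2 := iterDeriv ((el, (0 : EuclideanSpace ℝ (Fin (n+1)))) ::
    ((0 : EuclideanSpace ℝ (Fin (n+1))), el) :: vsF) (bfun atil) with hD2
  set K : Set (EuclideanSpace ℝ (Fin (n+1)) × EuclideanSpace ℝ (Fin (n+1))) :=
    {p | (1/2 ≤ ‖p.1‖ ∧ ‖p.1‖ ≤ 2) ∧ (1/2 ≤ ‖p.2‖ ∧ ‖p.2‖ ≤ 2)} with hK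
  have hKU : K ⊆ Uset n := by
    intro p hp
    obtain ⟨⟨ha1, _⟩, hb1, _⟩ := hp
    constructor
    · intro h0; rw [h0, norm_zero] at ha1; linarith
    · intro h0; rw [h0, norm_zero] at hb1; linarith
  have hKcompact : IsCompact K := by
    have hclosed : IsClosed K := by
      have : K = (fun p : EuclideanSpace ℝ (Fin (n+1)) × EuclideanSpace ℝ (Fin (n+1)) => ‖p.1‖) ⁻¹'
          (Set.Icc (1/2) 2) ∩
          (fun p : EuclideanSpace ℝ (Fin (n+1)) × EuclideanSpace ℝ (Fin (n+1)) => ‖p.2‖) ⁻¹'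
          (Set.Icc (1/2) 2) := by
        ext p
        simp [hK, Set.mem_Icc, and_assoc]
      rw [this]
      exact (isClosed_Icc.preimage (continuous_fst.norm)).inter
        (isClosed_Icc.preimage (continuous_snd.norm))
    have hbdd : Bornology.IsBounded K := by
      apply (Metric.isBounded_closedBall (x := (0 : EuclideanSpace ℝ (Fin (n+1)) ×
        EuclideanSpace ℝ (Fin (n+1)))) (r := 2)).subset
      intro p hp
      rw [Metric.mem_closedBall, dist_zero_right]
      rw [Prod.norm_def]
      exact max_le hp.1.2 hp.2.2
    exact Metric.isCompact_of_isClosed_isBounded hclosed hbdd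
  obtain ⟨M0, hM0⟩ := hKcompact.exists_bound_of_continuousOn
    ((iterDeriv_continuousOn Uset_open hb vsF).mono hKU)
  obtain ⟨M1, hM1⟩ := hKcompact.exists_bound_of_continuousOn
    ((iterDeriv_continuousOn Uset_open hb (((0 : EuclideanSpace ℝ (Fin (n+1))), el) :: vsF)).mono hKU)
  obtain ⟨M1', hM1'⟩ := hKcompact.exists_bound_of_continuousOn
    ((iterDeriv_continuousOn Uset_open hb ((el, (0 : EuclideanSpace ℝ (Fin (n+1)))) :: vsF)).mono hKU)
  obtain ⟨M2, hM2⟩ := hKcompact.exists_bound_of_continuousOn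
    ((iterDeriv_continuousOn Uset_open hb ((el, (0 : EuclideanSpace ℝ (Fin (n+1)))) ::
      ((0 : EuclideanSpace ℝ (Fin (n+1))), el) :: vsF)).mono hKU)
  set M := max (max M0 M1) (max M1' M2) with hM
  have hnel : ‖el‖ = 1 := norm_el
  have helK : (el, el) ∈ K := by
    refine ⟨⟨?_, ?_⟩, ?_, ?_⟩ <;> rw [(show ‖((el, el) : EuclideanSpace ℝ (Fin (n+1)) ×
      EuclideanSpace ℝ (Fin (n+1))).1‖ = 1 from hnel) ] <;> norm_num
  have hMnonneg : 0 ≤ M := le_trans (norm_nonneg (D (el, el)))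
    (le_trans (hM0 _ helK) (le_trans (le_max_left _ _) (le_max_left _ _)))
  have hM0K : ∀ p ∈ K, ‖D p‖ ≤ M := fun p hp =>
    le_trans (hM0 p hp) (le_trans (le_max_left _ _) (le_max_left _ _))
  have hM1K : ∀ p ∈ K, ‖D1 p‖ ≤ M := fun p hp =>
    le_trans (hM1 p hp) (le_trans (le_max_right _ _) (le_max_left _ _))
  have hM1'K : ∀ p ∈ K, ‖D1' p‖ ≤ M := fun p hp =>
    le_trans (hM1' p hp) (le_trans (le_max_left _ _) (le_max_right _ _))
  have hM2K : ∀ p ∈ K, ‖D2 p‖ ≤ M := fun p hp =>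
    le_trans (hM2 p hp) (le_trans (le_max_right _ _) (le_max_right _ _))
  have h1' : ∀ v ∈ ((0 : EuclideanSpace ℝ (Fin (n+1))), el) :: vsF, v.1 l = 0 := by
    intro v hv
    rcases List.mem_cons.1 hv with hv | hv
    · rw [hv]; rfl
    · exact h1 v hv
  refine ⟨4 * M + 1, by linarith, ?_⟩
  intro z w hz hw hzl hwl
  have hzne : z ≠ 0 := fun h0 => by rw [h0, norm_zero] at hz; norm_num at hz
  have hwne : w ≠ 0 := fun h0 => by rw [h0, norm_zero] at hw; norm_num at hw
  have hzl1 : z l ≤ 1 := by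
    have := abs_coord_le_norm z l; rw [hz] at this; exact le_trans (le_abs_self _) this
  have hwl1 : w l ≤ 1 := by
    have := abs_coord_le_norm w l; rw [hw] at this; exact le_trans (le_abs_self _) this
  -- CASE A : both coordinates small
  have caseA : z l ≤ 1/2 → w l ≤ 1/2 → ‖D (z, w)‖ ≤ M * z l * w l := by
    intro hz2 hw2
    have habs : ∀ s : ℝ, 0 ≤ s → s ≤ w l → |(-(w l) + s)| ≤ 1/2 := fun s hs0 hs1 => by
      rw [abs_le]; constructor <;> linarith
    have habsz : ∀ t : ℝ, 0 ≤ t → t ≤ z l → |(-(z l) + t)| ≤ 1/2 := fun t ht0 ht1 => by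
      rw [abs_le]; constructor <;> linarith
    -- membership of the outer segment
    have houtermem : ∀ s ∈ Set.Icc (0:ℝ) (w l),
        (z, w + (-(w l)) • el) + s • ((0 : EuclideanSpace ℝ (Fin (n+1))), el) ∈ Uset n := by
      intro s hs
      constructor
      · show z + s • (0 : EuclideanSpace ℝ (Fin (n+1))) ≠ 0
        rw [smul_zero, add_zero]; exact hzne
      · show w + (-(w l)) • el + s • el ≠ 0
        rw [add_smul_el]
        exact shift_ne_zero hw (habs s hs.1 hs.2)
    -- bound for the outer derivative via the inner MVT
    have houterbound : ∀ s ∈ Set.Icc (0:ℝ) (w l),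
        ‖iterDeriv (((0 : EuclideanSpace ℝ (Fin (n+1))), el) :: vsF) (bfun atil)
          ((z, w + (-(w l)) • el) + s • ((0 : EuclideanSpace ℝ (Fin (n+1))), el))‖
          ≤ M * z l := by
      intro s hs
      have hpt : (z, w + (-(w l)) • el) + s • ((0 : EuclideanSpace ℝ (Fin (n+1))), el)
          = (z, w + (-(w l) + s) • el) := by
        refine Prod.ext ?_ ?_
        · show z + s • (0 : EuclideanSpace ℝ (Fin (n+1))) = z
          rw [smul_zero, add_zero]
        · show w + (-(w l)) • el + s • el = w + (-(w l) + s) • el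
          exact add_smul_el w _ s
      rw [hpt]
      -- the inner segment
      have hinmem : ∀ t ∈ Set.Icc (0:ℝ) (z l),
          (z + (-(z l)) • el, w + (-(w l) + s) • el) + t •
            (el, (0 : EuclideanSpace ℝ (Fin (n+1)))) ∈ K := by
        intro t ht
        refine ⟨⟨?_, ?_⟩, ?_, ?_⟩
        · show 1/2 ≤ ‖z + (-(z l)) • el + t • el‖
          rw [add_smul_el]; exact (shift_norm_lb hz (habsz t ht.1 ht.2)).1
        · show ‖z + (-(z l)) • el + t • el‖ ≤ 2
          rw [add_smul_el]; exact (shift_norm_lb hz (habsz t ht.1 ht.2)).2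
        · show 1/2 ≤ ‖w + (-(w l) + s) • el + t • (0 : EuclideanSpace ℝ (Fin (n+1)))‖
          rw [smul_zero, add_zero]; exact (shift_norm_lb hw (habs s hs.1 hs.2)).1
        · show ‖w + (-(w l) + s) • el + t • (0 : EuclideanSpace ℝ (Fin (n+1)))‖ ≤ 2
          rw [smul_zero, add_zero]; exact (shift_norm_lb hw (habs s hs.1 hs.2)).2
      have hinmemU : ∀ t ∈ Set.Icc (0:ℝ) (z l),
          (z + (-(z l)) • el, w + (-(w l) + s) • el) + t •
            (el, (0 : EuclideanSpace ℝ (Fin (n+1)))) ∈ Uset n :=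
        fun t ht => hKU (hinmem t ht)
      have hinbound : ∀ t ∈ Set.Icc (0:ℝ) (z l),
          ‖iterDeriv ((el, (0 : EuclideanSpace ℝ (Fin (n+1)))) ::
            ((0 : EuclideanSpace ℝ (Fin (n+1))), el) :: vsF) (bfun atil)
            ((z + (-(z l)) • el, w + (-(w l) + s) • el) + t •
              (el, (0 : EuclideanSpace ℝ (Fin (n+1)))))‖ ≤ M :=
        fun t ht => hM2K _ (hinmem t ht)
      have hinner := line_mvt Uset_open hb
        (((0 : EuclideanSpace ℝ (Fin (n+1))), el) :: vsF)
        (z + (-(z l)) • el, w + (-(w l) + s) • el)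
        (el, (0 : EuclideanSpace ℝ (Fin (n+1)))) (z l) M hinmemU hinbound (le_of_lt hzl)
      rw [← hD1] at hinner
      have hend : (z + (-(z l)) • el, w + (-(w l) + s) • el) + (z l) •
          (el, (0 : EuclideanSpace ℝ (Fin (n+1)))) = (z, w + (-(w l) + s) • el) := by
        refine Prod.ext ?_ ?_
        · show z + (-(z l)) • el + (z l) • el = z
          rw [add_smul_el]; simp
        · show w + (-(w l) + s) • el + (z l) • (0 : EuclideanSpace ℝ (Fin (n+1)))
            = w + (-(w l) + s) • el
          rw [smul_zero, add_zero]
      have hstart0 : D1 (z + (-(z l)) • el, w + (-(w l) + s) • el) = 0 := by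
        apply Dvanish1c ha hvanish _ h1'
        · exact ⟨shift_ne_zero hz (by rw [abs_neg, abs_of_pos hzl]; exact hz2),
            shift_ne_zero hw (habs s hs.1 hs.2)⟩
        · show (z + (-(z l)) • el) l = 0
          rw [shift_coord]; ring
        · show 0 ≤ (w + (-(w l) + s) • el) l
          rw [shift_coord]; linarith [hs.1]
      rw [hend, hstart0, sub_zero] at hinner
      exact hinner
    have houter := line_mvt Uset_open hb vsF (z, w + (-(w l)) • el)
      ((0 : EuclideanSpace ℝ (Fin (n+1))), el) (w l) (M * z l) houtermem houterbound
      (le_of_lt hwl)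
    rw [← hD] at houter
    have hend : (z, w + (-(w l)) • el) + (w l) • ((0 : EuclideanSpace ℝ (Fin (n+1))), el)
        = (z, w) := by
      refine Prod.ext ?_ ?_
      · show z + (w l) • (0 : EuclideanSpace ℝ (Fin (n+1))) = z
        rw [smul_zero, add_zero]
      · show w + (-(w l)) • el + (w l) • el = w
        rw [add_smul_el]; simp
    have hstart0 : D (z, w + (-(w l)) • el) = 0 := by
      apply Dvanish2 ha hvanish vsF h2
      · exact ⟨hzne, shift_ne_zero hw (by rw [abs_neg, abs_of_pos hwl]; exact hw2)⟩
      · show (w + (-(w l)) • el) l = 0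
        rw [shift_coord]; ring
      · exact hzl
    rw [hend, hstart0, sub_zero] at houter
    calc ‖D (z, w)‖ ≤ M * z l * (w l) := houter
      _ = M * z l * w l := by ring
  -- CASE B : z small, w big : single MVT in the first variable
  have caseB : z l ≤ 1/2 → ‖D (z, w)‖ ≤ M * z l := by
    intro hz2
    have habsz : ∀ t : ℝ, 0 ≤ t → t ≤ z l → |(-(z l) + t)| ≤ 1/2 := fun t ht0 ht1 => by
      rw [abs_le]; constructor <;> linarith
    have hmemK : ∀ t ∈ Set.Icc (0:ℝ) (z l),
        (z + (-(z l)) • el, w) + t • (el, (0 : EuclideanSpace ℝ (Fin (n+1)))) ∈ K := by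
      intro t ht
      refine ⟨⟨?_, ?_⟩, ?_, ?_⟩
      · show 1/2 ≤ ‖z + (-(z l)) • el + t • el‖
        rw [add_smul_el]; exact (shift_norm_lb hz (habsz t ht.1 ht.2)).1
      · show ‖z + (-(z l)) • el + t • el‖ ≤ 2
        rw [add_smul_el]; exact (shift_norm_lb hz (habsz t ht.1 ht.2)).2
      · show 1/2 ≤ ‖w + t • (0 : EuclideanSpace ℝ (Fin (n+1)))‖
        rw [smul_zero, add_zero, hw]; norm_num
      · show ‖w + t • (0 : EuclideanSpace ℝ (Fin (n+1)))‖ ≤ 2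
        rw [smul_zero, add_zero, hw]; norm_num
    have hmemU : ∀ t ∈ Set.Icc (0:ℝ) (z l),
        (z + (-(z l)) • el, w) + t • (el, (0 : EuclideanSpace ℝ (Fin (n+1)))) ∈ Uset n :=
      fun t ht => hKU (hmemK t ht)
    have hbound : ∀ t ∈ Set.Icc (0:ℝ) (z l),
        ‖iterDeriv ((el, (0 : EuclideanSpace ℝ (Fin (n+1)))) :: vsF) (bfun atil)
          ((z + (-(z l)) • el, w) + t • (el, (0 : EuclideanSpace ℝ (Fin (n+1)))))‖ ≤ M :=
      fun t ht => hM1'K _ (hmemK t ht)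
    have hmvt := line_mvt Uset_open hb vsF (z + (-(z l)) • el, w)
      (el, (0 : EuclideanSpace ℝ (Fin (n+1)))) (z l) M hmemU hbound (le_of_lt hzl)
    rw [← hD] at hmvt
    have hend : (z + (-(z l)) • el, w) + (z l) • (el, (0 : EuclideanSpace ℝ (Fin (n+1))))
        = (z, w) := by
      refine Prod.ext ?_ ?_
      · show z + (-(z l)) • el + (z l) • el = z
        rw [add_smul_el]; simp
      · show w + (z l) • (0 : EuclideanSpace ℝ (Fin (n+1))) = w
        rw [smul_zero, add_zero]
    have hstart0 : D (z + (-(z l)) • el, w) = 0 := by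
      apply Dvanish1 ha hvanish vsF h1
      · exact ⟨shift_ne_zero hz (by rw [abs_neg, abs_of_pos hzl]; exact hz2), hwne⟩
      · show (z + (-(z l)) • el) l = 0
        rw [shift_coord]; ring
      · exact hwl
    rw [hend, hstart0, sub_zero] at hmvt
    exact hmvt
  -- CASE C : w small : single MVT in the second variable
  have caseC : w l ≤ 1/2 → ‖D (z, w)‖ ≤ M * w l := by
    intro hw2
    have habs : ∀ s : ℝ, 0 ≤ s → s ≤ w l → |(-(w l) + s)| ≤ 1/2 := fun s hs0 hs1 => by
      rw [abs_le]; constructor <;> linarith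
    have hmemK : ∀ s ∈ Set.Icc (0:ℝ) (w l),
        (z, w + (-(w l)) • el) + s • ((0 : EuclideanSpace ℝ (Fin (n+1))), el) ∈ K := by
      intro s hs
      refine ⟨⟨?_, ?_⟩, ?_, ?_⟩
      · show 1/2 ≤ ‖z + s • (0 : EuclideanSpace ℝ (Fin (n+1)))‖
        rw [smul_zero, add_zero, hz]; norm_num
      · show ‖z + s • (0 : EuclideanSpace ℝ (Fin (n+1)))‖ ≤ 2
        rw [smul_zero, add_zero, hz]; norm_num
      · show 1/2 ≤ ‖w + (-(w l)) • el + s • el‖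
        rw [add_smul_el]; exact (shift_norm_lb hw (habs s hs.1 hs.2)).1
      · show ‖w + (-(w l)) • el + s • el‖ ≤ 2
        rw [add_smul_el]; exact (shift_norm_lb hw (habs s hs.1 hs.2)).2
    have hmemU : ∀ s ∈ Set.Icc (0:ℝ) (w l),
        (z, w + (-(w l)) • el) + s • ((0 : EuclideanSpace ℝ (Fin (n+1))), el) ∈ Uset n :=
      fun s hs => hKU (hmemK s hs)
    have hbound : ∀ s ∈ Set.Icc (0:ℝ) (w l),
        ‖iterDeriv (((0 : EuclideanSpace ℝ (Fin (n+1))), el) :: vsF) (bfun atil)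
          ((z, w + (-(w l)) • el) + s • ((0 : EuclideanSpace ℝ (Fin (n+1))), el))‖ ≤ M :=
      fun s hs => hM1K _ (hmemK s hs)
    have hmvt := line_mvt Uset_open hb vsF (z, w + (-(w l)) • el)
      ((0 : EuclideanSpace ℝ (Fin (n+1))), el) (w l) M hmemU hbound (le_of_lt hwl)
    rw [← hD] at hmvt
    have hend : (z, w + (-(w l)) • el) + (w l) • ((0 : EuclideanSpace ℝ (Fin (n+1))), el)
        = (z, w) := by
      refine Prod.ext ?_ ?_
      · show z + (w l) • (0 : EuclideanSpace ℝ (Fin (n+1))) = z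
        rw [smul_zero, add_zero]
      · show w + (-(w l)) • el + (w l) • el = w
        rw [add_smul_el]; simp
    have hstart0 : D (z, w + (-(w l)) • el) = 0 := by
      apply Dvanish2 ha hvanish vsF h2
      · exact ⟨hzne, shift_ne_zero hw (by rw [abs_neg, abs_of_pos hwl]; exact hw2)⟩
      · show (w + (-(w l)) • el) l = 0
        rw [shift_coord]; ring
      · exact hzl
    rw [hend, hstart0, sub_zero] at hmvt
    exact hmvt
  -- CASE D : both big
  have caseD : ‖D (z, w)‖ ≤ M := by
    refine hM0K (z, w) ⟨⟨?_, ?_⟩, ?_, ?_⟩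
    · show 1/2 ≤ ‖z‖; rw [hz]; norm_num
    · show ‖z‖ ≤ 2; rw [hz]; norm_num
    · show 1/2 ≤ ‖w‖; rw [hw]; norm_num
    · show ‖w‖ ≤ 2; rw [hw]; norm_num
  exact arith_combine M (‖D (z, w)‖) (z l) (w l) hMnonneg (norm_nonneg _) hzl hzl1 hwl hwl1
    caseA caseB caseC caseD

theorem rpow_helper {s : ℝ} (hs : 0 < s) (k : ℕ) : s ^ ((-1 : ℝ) - k) = s⁻¹ ^ (k + 1) := by
  rw [inv_pow, ← Real.rpow_natCast s (k+1), ← Real.rpow_neg hs.le]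
  congr 1
  push_cast
  ring

theorem a_eq_bfun {atil : EuclideanSpace ℝ (Fin (n + 1)) × EuclideanSpace ℝ (Fin (n + 1)) → ℂ} :
    (fun p : EuclideanSpace ℝ (Fin n) × EuclideanSpace ℝ (Fin n) => atil (RC p.1, RC p.2))
      = fun p => bfun atil (q0 n + LLmap n p) :=
  funext fun p => by rw [J_eq, bfun, RC_eq, RC_eq]; rfl



theorem vanishing_principal_symbol_lower_order (n : ℕ)
    (atil : EuclideanSpace ℝ (Fin (n + 1)) × EuclideanSpace ℝ (Fin (n + 1)) → ℂ)
    (ha : ContDiff ℝ (⊤ : ℕ∞) atil)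
    (hvanish : ∀ p ∈ phaseBoundary n, atil p = 0) :
    IsSGSymbol n (-1) (-1) (fun p => atil (RC p.1, RC p.2)) := by
  constructor
  · -- smoothness
    rw [a_eq_bfun]
    rw [contDiff_iff_contDiffAt]
    intro p
    have hmem : q0 n + LLmap n p ∈ Uset n := by
      rw [J_eq]; exact ⟨iota_ne_zero _, iota_ne_zero _⟩
    have hbAt : ContDiffAt ℝ (⊤ : ℕ∞) (bfun atil) (q0 n + LLmap n p) :=
      (bfun_contDiffOn ha).contDiffAt (Uset_open.mem_nhds hmem)
    have hJ : ContDiffAt ℝ (⊤ : ℕ∞) (fun q : EuclideanSpace ℝ (Fin n) × EuclideanSpace ℝ (Fin n) =>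
        q0 n + LLmap n q) p := (contDiff_const.add (LLmap n).contDiff).contDiffAt
    exact hbAt.comp (g := bfun atil) p hJ
  · -- SG estimates
    intro β α
    set vsF := (β.map (eX n) ++ α.map (eXi n)).map (LLmap n) with hvsF
    have htan1 : ∀ v ∈ vsF, v.1 (Fin.last n) = 0 := by
      intro v hv
      obtain ⟨u, _, rfl⟩ := List.mem_map.1 hv
      exact snocL_last u.1
    have htan2 : ∀ v ∈ vsF, v.2 (Fin.last n) = 0 := by
      intro v hv
      obtain ⟨u, _, rfl⟩ := List.mem_map.1 hv
      exact snocL_last u.2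
    obtain ⟨C, hCpos, hC⟩ := core_bound ha hvanish vsF htan1 htan2
    refine ⟨C, hCpos, ?_⟩
    intro x ξ
    have hsx := sgBr_pos x
    have hsξ := sgBr_pos ξ
    set c := (sgBr x)⁻¹ with hc
    set d := (sgBr ξ)⁻¹ with hd
    have hcpos : 0 < c := inv_pos.2 hsx
    have hdpos : 0 < d := inv_pos.2 hsξ
    -- step 1 : chain rule
    have hstep1 := iterDeriv_a_eq ha (β.map (eX n) ++ α.map (eXi n)) x ξ
    -- step 2 : scaling
    have hmem : ((iota x, iota ξ) : EuclideanSpace ℝ (Fin (n+1)) × EuclideanSpace ℝ (Fin (n+1)))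
        ∈ Uset n := ⟨iota_ne_zero _, iota_ne_zero _⟩
    have hstep2 := iterDeriv_scaling ha hvanish β α hcpos hdpos (iota x, iota ξ) hmem
    -- the scaled point is (RC x, RC ξ)
    have hRCx : c • iota x = RC x := by rw [RC_eq, norm_iota, hc]
    have hRCξ : d • iota ξ = RC ξ := by rw [RC_eq, norm_iota, hd]
    have hpt : ((c • (iota x, iota ξ).1, d • (iota x, iota ξ).2) :
        EuclideanSpace ℝ (Fin (n+1)) × EuclideanSpace ℝ (Fin (n+1))) = (RC x, RC ξ) := by
      rw [show ((iota x, iota ξ).1 : EuclideanSpace ℝ (Fin (n+1))) = iota x from rfl,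
        show ((iota x, iota ξ).2 : EuclideanSpace ℝ (Fin (n+1))) = iota ξ from rfl, hRCx, hRCξ]
    rw [hpt] at hstep2
    -- combine
    rw [hstep1, hstep2]
    rw [norm_smul]
    have hnorms : ‖c ^ β.length * d ^ α.length‖ = c ^ β.length * d ^ α.length := by
      rw [Real.norm_eq_abs, abs_of_pos (by positivity)]
    rw [hnorms]
    have hbound := hC (RC x) (RC ξ) (norm_RC x) (norm_RC ξ)
      (by rw [RC_last]; exact hcpos) (by rw [RC_last]; exact hdpos)
    rw [RC_last, RC_last] at hbound
    calc c ^ β.length * d ^ α.length * ‖iterDeriv vsF (bfun atil) (RC x, RC ξ)‖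
        ≤ c ^ β.length * d ^ α.length * (C * (sgBr x)⁻¹ * (sgBr ξ)⁻¹) := by
          apply mul_le_mul_of_nonneg_left hbound (by positivity)
      _ = C * (sgBr x ^ ((-1 : ℝ) - (β.length : ℝ))) * (sgBr ξ ^ ((-1 : ℝ) - (α.length : ℝ))) := by
          rw [rpow_helper hsx β.length, rpow_helper hsξ α.length, hc, hd]
          ring
      _ = C * sgBr x ^ ((-1 : ℝ) - (β.length : ℝ)) * sgBr ξ ^ ((-1 : ℝ) - (α.length : ℝ)) := by
          ring
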